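/- arXiv:2309.10861 — 2 statements merged into one kernel-verified Lean document; each statement's English description precedes it below -/
import Mathlib

section
/- Let R be a commutative ring, let m ≥ 1, let β be a finite type, let A and A' be m×m matrices over the polynomial ring R[X], let C be an m×β matrix over R[X], and let E be a β×β matrix over R[X]. Suppose det(X·I − A) = det(X·I − A') and det((X·I − A)^{(1,m)}) = det((X·I − A')^{(1,m)}). Let M = fromBlocks A C 0 E and M' = fromBlocks A' C 0 E be the block matrices indexed by {1,…,m} ⊔ β. Then det(X·I − M) = det(X·I − M') and det((X·I − M)^{(1,m)}) = det((X·I − M')^{(1,m)}), where the deleted row 1 and column m are taken in the A-block. That is, if two sink models are identical outside of one path model on each, and those path models have identical input-output coefficient polynomials (e.g., are permutation indistinguishable after renaming), then the full sink models have identical input-output coefficient polynomials for the output and for the input on the differing path. -/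
open Polynomial Matrix

/-- `X·I − M` for a square matrix `M` over the polynomial ring `R[X]`. -/
noncomputable def xIsub {R : Type*} [CommRing R] {ι : Type*} [Fintype ι] [DecidableEq ι]
    (M : Matrix ι ι (Polynomial R)) : Matrix ι ι (Polynomial R) :=
  (Polynomial.X : Polynomial R) • (1 : Matrix ι ι (Polynomial R)) - M

/-- `M^{(1,m)}`: the `(m-1)×(m-1)` matrix obtained from an `m×m` matrix `M`
by deleting row `1` (index `0`) and column `m` (index `m-1`). -/
def minor1n {S : Type*} {m : ℕ} (M : Matrix (Fin m) (Fin m) S) :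
    Matrix (Fin (m - 1)) (Fin (m - 1)) S :=
  M.submatrix (fun k => ⟨(k : ℕ) + 1, by have := k.isLt; omega⟩)
    (fun k => ⟨(k : ℕ), by have := k.isLt; omega⟩)

/-- `M^{(1,m)}` for a square matrix indexed by `Fin m ⊕ β`: delete the row
indexed by `1` (index `Sum.inl 0`) and the column indexed by `m`
(index `Sum.inl (m-1)`), both in the `A`-block. -/
def minorSum1n {S : Type*} {β : Type*} {m : ℕ}
    (M : Matrix (Fin m ⊕ β) (Fin m ⊕ β) S) :
    Matrix (Fin (m - 1) ⊕ β) (Fin (m - 1) ⊕ β) S :=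
  M.submatrix
    (Sum.map (fun k => ⟨(k : ℕ) + 1, by have := k.isLt; omega⟩) id)
    (Sum.map (fun k => ⟨(k : ℕ), by have := k.isLt; omega⟩) id)

/-- Theorem (sink models): if two sink models `fromBlocks A C 0 E` and
`fromBlocks A' C 0 E` are identical outside of the distinguished path (whose
compartmental matrices `A`, `A'` have identical input-output coefficient
polynomials), then the full sink models have identical input-output coefficient
polynomials for the output `m` and the input `1` on the distinguished path. -/
theorem sink_indistinguishable {R : Type*} [CommRing R] {β : Type*} [Fintype β]
    [DecidableEq β] (m : ℕ) (hm : 1 ≤ m)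
    (A A' : Matrix (Fin m) (Fin m) (Polynomial R))
    (C : Matrix (Fin m) β (Polynomial R)) (E : Matrix β β (Polynomial R))
    (h1 : (xIsub A).det = (xIsub A').det)
    (h2 : (minor1n (xIsub A)).det = (minor1n (xIsub A')).det) :
    (xIsub (Matrix.fromBlocks A C 0 E)).det =
        (xIsub (Matrix.fromBlocks A' C 0 E)).det ∧
    (minorSum1n (xIsub (Matrix.fromBlocks A C 0 E))).det =
        (minorSum1n (xIsub (Matrix.fromBlocks A' C 0 E))).det := by

  have key : ∀ (B : Matrix (Fin m) (Fin m) (Polynomial R)),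
      xIsub (Matrix.fromBlocks B C 0 E) =
        Matrix.fromBlocks (xIsub B) (-C) 0 (xIsub E) := by
    intro B
    ext i j
    rcases i with i | i <;> rcases j with j | j <;>
      simp [xIsub, Matrix.one_apply, Matrix.fromBlocks, Matrix.sub_apply,
        Matrix.smul_apply, Sum.elim_inl, Sum.elim_inr]
  have key2 : ∀ (P : Matrix (Fin m) (Fin m) (Polynomial R))
      (Q : Matrix (Fin m) β (Polynomial R)) (S : Matrix β β (Polynomial R)),
      minorSum1n (Matrix.fromBlocks P Q 0 S) =
        Matrix.fromBlocks (minor1n P)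
          (Q.submatrix (fun k : Fin (m-1) => (⟨(k : ℕ) + 1, by have := k.isLt; omega⟩ : Fin m)) id)
          0 S := by
    intro P Q S
    ext i j
    rcases i with i | i <;> rcases j with j | j <;>
      simp [minorSum1n, minor1n, Matrix.fromBlocks, Matrix.submatrix_apply]
  rw [key, key, key2 (xIsub A), key2 (xIsub A'),
    Matrix.det_fromBlocks_zero₂₁, Matrix.det_fromBlocks_zero₂₁,
    Matrix.det_fromBlocks_zero₂₁, Matrix.det_fromBlocks_zero₂₁, h1, h2]
  exact ⟨rfl, rfl⟩
end

section
/- Let R be a commutative ring, let m ≥ 1, let β be a finite type, let A and A' be m×m matrices over the polynomial ring R[X], let C be an m×β matrix over R[X], and let E be a β×β matrix over R[X]. Suppose det(X·I − A) = det(X·I − A') and det((X·I − A)^{(1,m)}) = det((X·I − A')^{(1,m)}). Let N = (fromBlocks A C 0 E)ᵀ and N' = (fromBlocks A' C 0 E)ᵀ (the compartmental matrices of the corresponding source models, obtained by reversing all edges). Then det(X·I − N) = det(X·I − N') and det((X·I − N)^{(m,1)}) = det((X·I − N')^{(m,1)}), where the deleted row m and column 1 are taken in the transposed A-block. That is, if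 two source models are identical outside of one path model on each, and those path models have identical input-output coefficient polynomials, then the full source models have identical input-output coefficient polynomials for the shared input and for the output on the differing path. -/
open Polynomial Matrix

/-- `M^{(m,1)}` for a square matrix indexed by `Fin m ⊕ β`: delete the row
indexed by `m` (index `Sum.inl (m-1)`) and the column indexed by `1`
(index `Sum.inl 0`), both in the `A`-block. -/
def minorSumM1 {S : Type*} {β : Type*} {m : ℕ}
    (M : Matrix (Fin m ⊕ β) (Fin m ⊕ β) S) :
    Matrix (Fin (m - 1) ⊕ β) (Fin (m - 1) ⊕ β) S :=
  M.submatrix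
    (Sum.map (fun k => ⟨(k : ℕ), by have := k.isLt; omega⟩) id)
    (Sum.map (fun k => ⟨(k : ℕ) + 1, by have := k.isLt; omega⟩) id)

lemma xIsub_blocks {R : Type*} [CommRing R] {β : Type*} [Fintype β]
    [DecidableEq β] {m : ℕ}
    (A : Matrix (Fin m) (Fin m) (Polynomial R))
    (C : Matrix (Fin m) β (Polynomial R)) (E : Matrix β β (Polynomial R)) :
    xIsub (Matrix.fromBlocks A C 0 E)ᵀ =
      Matrix.fromBlocks (xIsub A)ᵀ 0 (-Cᵀ) (xIsub E)ᵀ := by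
  ext i j
  cases i <;> cases j <;>
    simp [xIsub, Matrix.fromBlocks, Matrix.one_apply, Matrix.transpose_apply,
      Matrix.smul_apply, sub_eq_iff_eq_add]

lemma minorSumM1_blocks {S : Type*} {β : Type*} {m : ℕ}
    (P : Matrix (Fin m) (Fin m) S) (Q : Matrix (Fin m) β S)
    (D : Matrix β (Fin m) S) (E : Matrix β β S) :
    minorSumM1 (Matrix.fromBlocks P Q D E) =
      Matrix.fromBlocks
        (P.submatrix (fun k : Fin (m-1) => ⟨(k : ℕ), by have := k.isLt; omega⟩)
          (fun k : Fin (m-1) => ⟨(k : ℕ) + 1, by have := k.isLt; omega⟩))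
        (Q.submatrix (fun k : Fin (m-1) => ⟨(k : ℕ), by have := k.isLt; omega⟩) id)
        (D.submatrix id (fun k : Fin (m-1) => ⟨(k : ℕ) + 1, by have := k.isLt; omega⟩))
        E := by
  ext i j
  cases i <;> cases j <;> rfl


/-- Theorem (source models): if two source models `(fromBlocks A C 0 E)ᵀ` and
`(fromBlocks A' C 0 E)ᵀ` are identical outside of the distinguished path (whose
compartmental matrices `A`, `A'` have identical input-output coefficient
polynomials), then the full source models have identical input-output
coefficient polynomials for the shared input `m` and the output `1` on the
distinguished path. -/
theorem source_indistinguishable {R : Type*} [CommRing R] {β : Type*} [Fintype β]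
    [DecidableEq β] (m : ℕ) (hm : 1 ≤ m)
    (A A' : Matrix (Fin m) (Fin m) (Polynomial R))
    (C : Matrix (Fin m) β (Polynomial R)) (E : Matrix β β (Polynomial R))
    (h1 : (xIsub A).det = (xIsub A').det)
    (h2 : (minor1n (xIsub A)).det = (minor1n (xIsub A')).det) :
    (xIsub (Matrix.fromBlocks A C 0 E)ᵀ).det =
        (xIsub (Matrix.fromBlocks A' C 0 E)ᵀ).det ∧
    (minorSumM1 (xIsub (Matrix.fromBlocks A C 0 E)ᵀ)).det =
        (minorSumM1 (xIsub (Matrix.fromBlocks A' C 0 E)ᵀ)).det := by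
  constructor
  · rw [xIsub_blocks, xIsub_blocks, Matrix.det_fromBlocks_zero₁₂,
      Matrix.det_fromBlocks_zero₁₂]
    simp [Matrix.det_transpose, h1]
  · rw [xIsub_blocks, xIsub_blocks, minorSumM1_blocks, minorSumM1_blocks]
    simp only [Matrix.submatrix_zero, Pi.zero_apply]
    rw [Matrix.det_fromBlocks_zero₁₂, Matrix.det_fromBlocks_zero₁₂]
    congr 1
    have key : ∀ (B : Matrix (Fin m) (Fin m) (Polynomial R)),
        ((xIsub B)ᵀ.submatrix (fun k : Fin (m-1) => (⟨(k : ℕ), by have := k.isLt; omega⟩ : Fin m))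
          (fun k : Fin (m-1) => (⟨(k : ℕ) + 1, by have := k.isLt; omega⟩ : Fin m))).det
        = (minor1n (xIsub B)).det := by
      intro B
      rw [← Matrix.det_transpose]
      congr 1
    rw [key A, key A', h2]
end
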